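/- Let λ < 0. Then there exist constants C > 0 and x₀ > 0 such that for all x ≥ x₀, | (1 - F_λ(x)) · (-λ) π (1+λ²) x² exp((1+λ²)x²/2) - (1 - ((1+3λ²)/(λ²(1+λ²))) x^{-2} + ((15λ⁴ + 10λ² + 3)/(λ⁴(1+λ²)²)) x^{-4}) | ≤ C x^{-6}; that is, 1 - F_λ(x) = (exp(-(1+λ²)x²/2) / ((-λ)π(1+λ²)x²)) · (1 - ((1+3λ²)/(λ²(1+λ²))) x^{-2} + ((15λ⁴ + 10λ² + 3)/(λ⁴(1+λ²)²)) x^{-4} + O(x^{-6})) as x → ∞. -/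

import Mathlib

open Real MeasureTheory Filter Topology

/-- Standard normal density. -/
noncomputable def stdPhi (x : ℝ) : ℝ := (Real.sqrt (2 * Real.pi))⁻¹ * Real.exp (-(x ^ 2) / 2)

/-- Standard normal cdf. -/
noncomputable def stdCdf (x : ℝ) : ℝ := ∫ t in Set.Iic x, stdPhi t

/-- Skew normal density with shape parameter l. -/
noncomputable def snPdf (l x : ℝ) : ℝ := 2 * stdPhi x * stdCdf (l * x)

/-- Skew normal cdf with shape parameter l. -/
noncomputable def snCdf (l x : ℝ) : ℝ := ∫ t in Set.Iic x, snPdf l t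

/-- Gumbel extreme value distribution function. -/
noncomputable def gumbel (x : ℝ) : ℝ := Real.exp (-Real.exp (-x))

/-!
Write `1 - F_l(x) = ∫_x^∞ 2 φ(t) Φ(l t) dt`. Differentiating
`H(t) = Φ(l t) · 2 φ(t) m(t) + B(t) e^{-(1+l²)t²/2}`, where `φ(t) m(t)` with
`m(t) = 1/t - 1/t³ + 3/t⁵` is the three-term asymptotic series of `Φ(-t)` and the Laurent
polynomial `B` absorbs the derivative of `Φ(l t)` (recall
`φ(l t) φ(t) = e^{-(1+l²)t²/2} / 2π`), gives `H' = -f_l + r`. For `l < 0` the bound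
`Φ(l t) ≤ φ(l t) / (-l t)` makes `r(t) = O(t⁻⁷ e^{-(1+l²)t²/2})`, hence
`1 - F_l(x) = H(x) + O(x⁻⁸ e^{-(1+l²)x²/2})`. Expanding `Φ(l x) = Φ(-(-l) x)` inside `H(x)` by
the same three-term series turns `H(x)` into `e^{-(1+l²)x²/2} / (-l π (1+l²) x²)` times an
explicit rational function of `x`, which agrees with the claimed expansion up to `O(x⁻⁶)`.
-/

open Set Asymptotics ProbabilityTheory

lemma tendsto_exp_neg_mul_sq_atTop {b : ℝ} (hb : 0 < b) :
    Tendsto (fun t => exp (-b * t ^ 2)) atTop (𝓝 0) :=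
  tendsto_exp_atBot.comp
    ((tendsto_pow_atTop two_ne_zero).const_mul_atTop_of_neg (neg_lt_zero.2 hb))

lemma hasDerivAt_exp_neg_mul_sq (b t : ℝ) :
    HasDerivAt (fun s => exp (-b * s ^ 2)) (-(2 * b * t) * exp (-b * t ^ 2)) t :=
  ((hasDerivAt_pow 2 t).const_mul (-b)).exp.congr_deriv (by push_cast; ring)

lemma exp_neg_mul_sq_mul_exp_mul_sq (a x : ℝ) :
    exp (-(a / 2) * x ^ 2) * exp (a * x ^ 2 / 2) = 1 := by
  rw [← exp_add, ← exp_zero]; ring_nf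

lemma integral_Ioi_mul_exp_neg_mul_sq {b : ℝ} (hb : 0 < b) (x : ℝ) :
    ∫ t in Ioi x, t * exp (-b * t ^ 2) = exp (-b * x ^ 2) / (2 * b) := by
  have hderiv : ∀ t ∈ Ici x,
      HasDerivAt (fun s => -exp (-b * s ^ 2) / (2 * b)) (t * exp (-b * t ^ 2)) t := fun t _ =>
    ((hasDerivAt_exp_neg_mul_sq b t).neg.div_const (2 * b)).congr_deriv (by field_simp)
  have hlim : Tendsto (fun s => -exp (-b * s ^ 2) / (2 * b)) atTop (𝓝 0) := by
    simpa using (tendsto_exp_neg_mul_sq_atTop hb).neg.div_const (2 * b)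
  rw [integral_Ioi_of_hasDerivAt_of_tendsto' hderiv
    (integrable_mul_exp_neg_mul_sq hb).integrableOn hlim]
  ring

lemma exp_neg_mul_sq_div_pow_le {b x t : ℝ} (n : ℕ) (hx : 0 < x) (hxt : x < t) :
    exp (-b * t ^ 2) / t ^ n ≤ t * exp (-b * t ^ 2) / x ^ (n + 1) := by
  have ht : 0 < t := hx.trans hxt
  rw [div_le_div_iff₀ (by positivity) (by positivity), mul_comm t, mul_assoc, ← pow_succ']
  gcongr

lemma integrableOn_Ioi_exp_neg_mul_sq_div_pow {b x : ℝ} (hb : 0 < b) (hx : 0 < x) (n : ℕ) :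
    IntegrableOn (fun t => exp (-b * t ^ 2) / t ^ n) (Ioi x) := by
  refine Integrable.mono' ((integrable_mul_exp_neg_mul_sq hb).integrableOn.div_const
    (x ^ (n + 1))) ?_ ?_
  · exact (ContinuousOn.div (by fun_prop) (by fun_prop)
      fun t ht => pow_ne_zero n (hx.trans ht).ne').aestronglyMeasurable measurableSet_Ioi
  · filter_upwards [ae_restrict_mem measurableSet_Ioi] with t ht
    rw [norm_of_nonneg (div_nonneg (exp_pos _).le (pow_nonneg (hx.trans ht).le n))]
    exact exp_neg_mul_sq_div_pow_le n hx ht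

lemma integral_Ioi_exp_neg_mul_sq_div_pow_le {b x : ℝ} (hb : 0 < b) (hx : 0 < x) (n : ℕ) :
    ∫ t in Ioi x, exp (-b * t ^ 2) / t ^ n ≤ exp (-b * x ^ 2) / (2 * b * x ^ (n + 1)) := by
  calc ∫ t in Ioi x, exp (-b * t ^ 2) / t ^ n
      ≤ ∫ t in Ioi x, t * exp (-b * t ^ 2) / x ^ (n + 1) :=
        setIntegral_mono_on (integrableOn_Ioi_exp_neg_mul_sq_div_pow hb hx n)
          ((integrable_mul_exp_neg_mul_sq hb).integrableOn.div_const _) measurableSet_Ioi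
          fun t ht => exp_neg_mul_sq_div_pow_le n hx ht
    _ = exp (-b * x ^ 2) / (2 * b * x ^ (n + 1)) := by
        rw [integral_div, integral_Ioi_mul_exp_neg_mul_sq hb, div_div]

lemma hasDerivAt_inv_pow (n : ℕ) {t : ℝ} (ht : t ≠ 0) :
    HasDerivAt (fun y : ℝ => (y ^ n)⁻¹) (-n * (t ^ (n + 1))⁻¹) t := by
  refine ((hasDerivAt_pow n t).inv (pow_ne_zero n ht)).congr_deriv ?_
  rcases n with _ | n
  · simp
  · rw [Nat.add_sub_cancel]
    field_simp
    ring

lemma tendsto_inv_pow_atTop_zero {n : ℕ} (hn : n ≠ 0) :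
    Tendsto (fun t : ℝ => (t ^ n)⁻¹) atTop (𝓝 0) :=
  (tendsto_pow_atTop hn).inv_tendsto_atTop

lemma isBigO_inv_pow_inv_pow {m n : ℕ} (h : m ≤ n) :
    (fun x : ℝ => (x ^ n)⁻¹) =O[atTop] fun x => (x ^ m)⁻¹ :=
  IsBigO.of_bound' <| (eventually_ge_atTop 1).mono fun x hx => by
    simp only [norm_inv, norm_pow, Real.norm_of_nonneg (zero_le_one.trans hx)]
    exact inv_anti₀ (by positivity) (pow_le_pow_right₀ hx h)

lemma stdPhi_eq_gaussianPDFReal : stdPhi = gaussianPDFReal 0 1 := by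
  ext x
  simp [stdPhi, gaussianPDFReal]

lemma stdPhi_eq (x : ℝ) : stdPhi x = (√(2 * π))⁻¹ * exp (-(1 / 2) * x ^ 2) := by
  rw [stdPhi]; ring_nf

lemma stdPhi_pos (x : ℝ) : 0 < stdPhi x := by
  rw [stdPhi]; positivity

lemma stdPhi_neg (x : ℝ) : stdPhi (-x) = stdPhi x := by
  simp [stdPhi]

@[fun_prop]
lemma continuous_stdPhi : Continuous stdPhi := by
  unfold stdPhi; fun_prop

lemma integrable_stdPhi : Integrable stdPhi := by
  simpa [stdPhi_eq_gaussianPDFReal] using integrable_gaussianPDFReal 0 1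

lemma integral_stdPhi : ∫ x, stdPhi x = 1 := by
  simpa [stdPhi_eq_gaussianPDFReal] using integral_gaussianPDFReal_eq_one 0 one_ne_zero

lemma hasDerivAt_stdPhi (x : ℝ) : HasDerivAt stdPhi (-x * stdPhi x) x := by
  rw [show stdPhi = fun y => (√(2 * π))⁻¹ * exp (-(1 / 2) * y ^ 2) from funext stdPhi_eq]
  exact ((hasDerivAt_exp_neg_mul_sq _ x).const_mul _).congr_deriv (by ring)

lemma tendsto_stdPhi_atTop : Tendsto stdPhi atTop (𝓝 0) := by
  have h' := (tendsto_exp_neg_mul_sq_atTop one_half_pos).const_mul (√(2 * π))⁻¹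
  rw [mul_zero] at h'
  exact h'.congr fun t => (stdPhi_eq t).symm

lemma stdPhi_mul_stdPhi (l t : ℝ) :
    stdPhi (l * t) * stdPhi t = (2 * π)⁻¹ * exp (-((1 + l ^ 2) / 2) * t ^ 2) := by
  rw [stdPhi, stdPhi, mul_mul_mul_comm, ← exp_add, ← mul_inv,
    mul_self_sqrt (by positivity : (0:ℝ) ≤ 2 * π)]
  ring_nf

lemma stdCdf_neg_eq_integral_Ioi (v : ℝ) : stdCdf (-v) = ∫ t in Ioi v, stdPhi t := by
  rw [stdCdf, ← integral_comp_neg_Ioi]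
  simp_rw [stdPhi_neg]

lemma stdCdf_add_stdCdf_neg (v : ℝ) : stdCdf v + stdCdf (-v) = 1 := by
  rw [stdCdf, stdCdf_neg_eq_integral_Ioi, intervalIntegral.integral_Iic_add_Ioi
    integrable_stdPhi.integrableOn integrable_stdPhi.integrableOn, integral_stdPhi]

lemma stdCdf_nonneg (v : ℝ) : 0 ≤ stdCdf v :=
  setIntegral_nonneg measurableSet_Iic fun x _ => (stdPhi_pos x).le

lemma stdCdf_le_one (v : ℝ) : stdCdf v ≤ 1 := by
  linarith [stdCdf_add_stdCdf_neg v, stdCdf_nonneg (-v)]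

lemma hasDerivAt_stdCdf (x : ℝ) : HasDerivAt stdCdf (stdPhi x) x := by
  have h : stdCdf = fun y => stdCdf 0 + ∫ t in (0 : ℝ)..y, stdPhi t := by
    ext y
    rw [← intervalIntegral.integral_Iic_sub_Iic integrable_stdPhi.integrableOn
      integrable_stdPhi.integrableOn, stdCdf, stdCdf, add_sub_cancel]
  rw [h]
  exact (continuous_stdPhi.integral_hasStrictDerivAt 0 x).hasDerivAt.const_add _

@[fun_prop]
lemma continuous_stdCdf : Continuous stdCdf :=
  continuous_iff_continuousAt.2 fun x => (hasDerivAt_stdCdf x).continuousAt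

lemma stdPhi_div_pow (t : ℝ) (n : ℕ) :
    stdPhi t / t ^ n = (√(2 * π))⁻¹ * (exp (-(1 / 2) * t ^ 2) / t ^ n) := by
  rw [stdPhi_eq, mul_div_assoc]

lemma integrableOn_Ioi_stdPhi_div_pow {x : ℝ} (hx : 0 < x) (n : ℕ) :
    IntegrableOn (fun t => stdPhi t / t ^ n) (Ioi x) := by
  simp_rw [stdPhi_div_pow]
  exact (integrableOn_Ioi_exp_neg_mul_sq_div_pow one_half_pos hx n).const_mul _

lemma integral_Ioi_stdPhi_div_pow_le {x : ℝ} (hx : 0 < x) (n : ℕ) :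
    ∫ t in Ioi x, stdPhi t / t ^ n ≤ stdPhi x / x ^ (n + 1) := by
  simp_rw [stdPhi_div_pow, integral_const_mul]
  calc (√(2 * π))⁻¹ * ∫ t in Ioi x, exp (-(1 / 2) * t ^ 2) / t ^ n
      ≤ (√(2 * π))⁻¹ * (exp (-(1 / 2) * x ^ 2) / (2 * (1 / 2) * x ^ (n + 1))) := by
        gcongr
        exact integral_Ioi_exp_neg_mul_sq_div_pow_le one_half_pos hx n
    _ = (√(2 * π))⁻¹ * (exp (-(1 / 2) * x ^ 2) / x ^ (n + 1)) := by norm_num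

lemma stdCdf_neg_le {v : ℝ} (hv : 0 < v) : stdCdf (-v) ≤ stdPhi v / v := by
  simpa [stdCdf_neg_eq_integral_Ioi] using integral_Ioi_stdPhi_div_pow_le hv 0

noncomputable def millsApprox (v : ℝ) : ℝ := v⁻¹ - (v ^ 3)⁻¹ + 3 * (v ^ 5)⁻¹

lemma millsApprox_eq_div {v : ℝ} (hv : v ≠ 0) :
    millsApprox v = (v ^ 4 - v ^ 2 + 3) / v ^ 5 := by
  rw [millsApprox]; field_simp

lemma millsApprox_nonneg {v : ℝ} (hv : 0 < v) : 0 ≤ millsApprox v := by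
  rw [millsApprox_eq_div hv.ne']
  exact div_nonneg (by nlinarith [sq_nonneg (v ^ 2 - 1)]) (by positivity)

lemma millsApprox_le_inv {v : ℝ} (hv : 0 < v) (hv3 : 3 ≤ v ^ 2) : millsApprox v ≤ v⁻¹ := by
  rw [millsApprox_eq_div hv.ne', inv_eq_one_div, div_le_div_iff₀ (by positivity) hv]
  nlinarith [pow_pos hv 4]

lemma hasDerivAt_millsApprox {v : ℝ} (hv : v ≠ 0) :
    HasDerivAt millsApprox (-(v ^ 2)⁻¹ + 3 * (v ^ 4)⁻¹ - 15 * (v ^ 6)⁻¹) v :=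
  (((hasDerivAt_inv hv).sub (hasDerivAt_inv_pow 3 hv)).add
    ((hasDerivAt_inv_pow 5 hv).const_mul 3)).congr_deriv (by push_cast; ring)

lemma tendsto_millsApprox_atTop : Tendsto millsApprox atTop (𝓝 0) := by
  have h := (tendsto_inv_atTop_zero.sub (tendsto_inv_pow_atTop_zero three_ne_zero)).add
    ((tendsto_inv_pow_atTop_zero (n := 5) (by norm_num)).const_mul 3)
  rwa [sub_zero, mul_zero, add_zero] at h

lemma hasDerivAt_stdPhi_mul_millsApprox {v : ℝ} (hv : v ≠ 0) :
    HasDerivAt (fun t => stdPhi t * millsApprox t) (-stdPhi v - 15 * (stdPhi v / v ^ 6)) v :=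
  ((hasDerivAt_stdPhi v).mul (hasDerivAt_millsApprox hv)).congr_deriv <| by
    rw [millsApprox]; field_simp; ring

lemma stdCdf_neg_eq_stdPhi_mul_millsApprox_sub {v : ℝ} (hv : 0 < v) :
    stdCdf (-v) = stdPhi v * millsApprox v - 15 * ∫ t in Ioi v, stdPhi t / t ^ 6 := by
  have hphi : IntegrableOn (fun t => -stdPhi t) (Ioi v) := integrable_stdPhi.integrableOn.neg
  have hint := (integrableOn_Ioi_stdPhi_div_pow hv 6).const_mul 15
  have hftc := integral_Ioi_of_hasDerivAt_of_tendsto'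
    (fun t ht => hasDerivAt_stdPhi_mul_millsApprox (hv.trans_le ht).ne') (hphi.sub hint)
    (by simpa using tendsto_stdPhi_atTop.mul tendsto_millsApprox_atTop)
  rw [integral_sub hphi hint, integral_neg, integral_const_mul,
    ← stdCdf_neg_eq_integral_Ioi] at hftc
  linarith

lemma continuous_snPdf (l : ℝ) : Continuous (snPdf l) := by
  unfold snPdf; fun_prop

lemma snPdf_nonneg (l t : ℝ) : 0 ≤ snPdf l t :=
  mul_nonneg (mul_nonneg zero_le_two (stdPhi_pos t).le) (stdCdf_nonneg _)

lemma snPdf_le (l t : ℝ) : snPdf l t ≤ 2 * stdPhi t :=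
  mul_le_of_le_one_right (mul_nonneg zero_le_two (stdPhi_pos t).le) (stdCdf_le_one _)

lemma integrable_snPdf (l : ℝ) : Integrable (snPdf l) := by
  refine (integrable_stdPhi.const_mul 2).mono' (continuous_snPdf l).aestronglyMeasurable
    (ae_of_all _ fun t => ?_)
  rw [norm_of_nonneg (snPdf_nonneg l t)]
  exact snPdf_le l t

lemma snPdf_add_snPdf_neg (l t : ℝ) : snPdf l t + snPdf l (-t) = 2 * stdPhi t := by
  rw [snPdf, snPdf, stdPhi_neg, mul_neg, ← mul_add, stdCdf_add_stdCdf_neg, mul_one]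

lemma integral_snPdf (l : ℝ) : ∫ t, snPdf l t = 1 := by
  have h := integral_add (integrable_snPdf l) (integrable_snPdf l).comp_neg
  simp_rw [snPdf_add_snPdf_neg, integral_const_mul, integral_stdPhi, integral_neg_eq_self] at h
  linarith

lemma one_sub_snCdf (l x : ℝ) : 1 - snCdf l x = ∫ t in Ioi x, snPdf l t := by
  rw [← integral_snPdf l, snCdf, ← intervalIntegral.integral_Iic_add_Ioi
    (integrable_snPdf l).integrableOn (integrable_snPdf l).integrableOn, add_sub_cancel_left]

noncomputable def snTailCoeff6 (l : ℝ) : ℝ :=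
  l * (3 * l ^ 4 + 10 * l ^ 2 + 15) / (π * (1 + l ^ 2) ^ 3)

-- The coefficients come from matching powers of `t` in `B' = (1 + l²) t B - (l / π) m(t)`.
noncomputable def snTailCorrection (l t : ℝ) : ℝ :=
  l / (π * (1 + l ^ 2)) * (t ^ 2)⁻¹ - l * (3 + l ^ 2) / (π * (1 + l ^ 2) ^ 2) * (t ^ 4)⁻¹
    + snTailCoeff6 l * (t ^ 6)⁻¹

noncomputable def snTailApprox (l t : ℝ) : ℝ :=
  stdCdf (l * t) * (2 * (stdPhi t * millsApprox t))
    + snTailCorrection l t * exp (-((1 + l ^ 2) / 2) * t ^ 2)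

noncomputable def snTailRemainder (l t : ℝ) : ℝ :=
  -(30 * (stdPhi t * stdCdf (l * t) / t ^ 6))
    - 6 * snTailCoeff6 l * (exp (-((1 + l ^ 2) / 2) * t ^ 2) / t ^ 7)

lemma hasDerivAt_snTailCorrection {l t : ℝ} (ht : t ≠ 0) :
    HasDerivAt (snTailCorrection l) ((1 + l ^ 2) * t * snTailCorrection l t
      - l / π * millsApprox t - 6 * snTailCoeff6 l / t ^ 7) t := by
  refine ((((hasDerivAt_inv_pow 2 ht).const_mul _).sub ((hasDerivAt_inv_pow 4 ht).const_mul _)).add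
    ((hasDerivAt_inv_pow 6 ht).const_mul _)).congr_deriv ?_
  have : 1 + l ^ 2 ≠ 0 := by positivity
  rw [snTailCorrection, millsApprox, snTailCoeff6]
  field_simp
  ring

lemma hasDerivAt_snTailApprox {l t : ℝ} (ht : t ≠ 0) :
    HasDerivAt (snTailApprox l) (-snPdf l t + snTailRemainder l t) t := by
  have hcdf : HasDerivAt (fun s => stdCdf (l * s)) (stdPhi (l * t) * l) t :=
    (hasDerivAt_stdCdf (l * t)).comp t (by simpa using (hasDerivAt_id t).const_mul l)
  refine ((hcdf.mul ((hasDerivAt_stdPhi_mul_millsApprox ht).const_mul 2)).add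
    ((hasDerivAt_snTailCorrection ht).mul (hasDerivAt_exp_neg_mul_sq _ t))).congr_deriv ?_
  rw [snPdf, snTailRemainder]
  linear_combination (2 * l * millsApprox t) * stdPhi_mul_stdPhi l t

lemma tendsto_snTailCorrection_atTop (l : ℝ) : Tendsto (snTailCorrection l) atTop (𝓝 0) := by
  have h2 := tendsto_inv_pow_atTop_zero (n := 2) two_ne_zero
  have h4 := tendsto_inv_pow_atTop_zero (n := 4) four_ne_zero
  have h6 := tendsto_inv_pow_atTop_zero (n := 6) (by norm_num)
  have h := ((h2.const_mul (l / (π * (1 + l ^ 2)))).sub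
      (h4.const_mul (l * (3 + l ^ 2) / (π * (1 + l ^ 2) ^ 2)))).add (h6.const_mul (snTailCoeff6 l))
  rwa [mul_zero, mul_zero, mul_zero, sub_zero, add_zero] at h

lemma tendsto_snTailApprox_atTop (l : ℝ) : Tendsto (snTailApprox l) atTop (𝓝 0) := by
  have hcdf : IsBoundedUnder (· ≤ ·) atTop (norm ∘ fun t => stdCdf (l * t)) :=
    isBoundedUnder_of ⟨1, fun t => by
      simpa [abs_of_nonneg (stdCdf_nonneg _)] using stdCdf_le_one (l * t)⟩
  have hmills : Tendsto (fun t => 2 * (stdPhi t * millsApprox t)) atTop (𝓝 0) := by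
    simpa using (tendsto_stdPhi_atTop.mul tendsto_millsApprox_atTop).const_mul 2
  have h := (isBoundedUnder_le_mul_tendsto_zero hcdf hmills).add
    ((tendsto_snTailCorrection_atTop l).mul
      (tendsto_exp_neg_mul_sq_atTop (b := (1 + l ^ 2) / 2) (by positivity)))
  rwa [mul_zero, add_zero] at h

lemma integrableOn_Ioi_snTailRemainder (l : ℝ) {x : ℝ} (hx : 0 < x) :
    IntegrableOn (snTailRemainder l) (Ioi x) := by
  have hphi : IntegrableOn (fun t => stdPhi t * stdCdf (l * t) / t ^ 6) (Ioi x) := by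
    refine (integrableOn_Ioi_stdPhi_div_pow hx 6).mono' ?_ ?_
    · exact (ContinuousOn.div (by fun_prop) (by fun_prop)
        fun t ht => pow_ne_zero 6 (hx.trans ht).ne').aestronglyMeasurable measurableSet_Ioi
    · filter_upwards [ae_restrict_mem measurableSet_Ioi] with t ht
      rw [norm_of_nonneg (by have := stdPhi_pos t; have := stdCdf_nonneg (l * t); positivity)]
      gcongr
      exact mul_le_of_le_one_right (stdPhi_pos t).le (stdCdf_le_one _)
  exact (hphi.const_mul 30).neg.sub
    ((integrableOn_Ioi_exp_neg_mul_sq_div_pow (by positivity) hx 7).const_mul _)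

lemma one_sub_snCdf_eq_snTailApprox_add (l : ℝ) {x : ℝ} (hx : 0 < x) :
    1 - snCdf l x = snTailApprox l x + ∫ t in Ioi x, snTailRemainder l t := by
  have hpdf : IntegrableOn (fun t => -snPdf l t) (Ioi x) := (integrable_snPdf l).integrableOn.neg
  have hrem := integrableOn_Ioi_snTailRemainder l hx
  have hftc := integral_Ioi_of_hasDerivAt_of_tendsto'
    (fun t ht => hasDerivAt_snTailApprox (hx.trans_le ht).ne') (hpdf.add hrem)
    (tendsto_snTailApprox_atTop l)
  rw [integral_add hpdf hrem, integral_neg, ← one_sub_snCdf] at hftc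
  linarith

noncomputable def snTailScale (l x : ℝ) : ℝ :=
  -l * π * (1 + l ^ 2) * x ^ 2 * exp ((1 + l ^ 2) * x ^ 2 / 2)

noncomputable def snTailExpansion (l x : ℝ) : ℝ :=
  1 - ((1 + 3 * l ^ 2) / (l ^ 2 * (1 + l ^ 2))) * (x ^ 2)⁻¹ +
    ((15 * l ^ 4 + 10 * l ^ 2 + 3) / (l ^ 4 * (1 + l ^ 2) ^ 2)) * (x ^ 4)⁻¹

lemma millsApprox_mul_millsApprox_add_snTailCorrection {l x : ℝ} (hl : l ≠ 0) (hx : x ≠ 0) :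
    (millsApprox (-l * x) * millsApprox x / π + snTailCorrection l x) *
        (-l * π * (1 + l ^ 2) * x ^ 2) =
      snTailExpansion l x - 3 * (1 + l ^ 2) ^ 2 / l ^ 4 * (x ^ 6)⁻¹
        + 9 * (1 + l ^ 2) / l ^ 4 * (x ^ 8)⁻¹ := by
  have : 1 + l ^ 2 ≠ 0 := by positivity
  rw [millsApprox_eq_div (by simp [hl, hx]), millsApprox_eq_div hx, snTailCorrection,
    snTailCoeff6, snTailExpansion]
  field_simp
  ring

lemma snTailApprox_mul_snTailScale {l x : ℝ} (hl : l < 0) (hx : 0 < x) :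
    snTailApprox l x * snTailScale l x =
      snTailExpansion l x - 3 * (1 + l ^ 2) ^ 2 / l ^ 4 * (x ^ 6)⁻¹
        + 9 * (1 + l ^ 2) / l ^ 4 * (x ^ 8)⁻¹
        - 30 * (∫ t in Ioi (-l * x), stdPhi t / t ^ 6) * (stdPhi x * millsApprox x)
          * snTailScale l x := by
  have hcdf := stdCdf_neg_eq_stdPhi_mul_millsApprox_sub (mul_pos (neg_pos.2 hl) hx)
  rw [show -(-l * x) = l * x by ring] at hcdf
  have hphi : stdPhi (-l * x) * stdPhi x = (2 * π)⁻¹ * exp (-((1 + l ^ 2) / 2) * x ^ 2) := by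
    rw [stdPhi_mul_stdPhi, neg_sq]
  rw [snTailApprox, hcdf, snTailScale]
  linear_combination
    (2 * millsApprox (-l * x) * millsApprox x * (-l * π * (1 + l ^ 2) * x ^ 2)
      * exp ((1 + l ^ 2) * x ^ 2 / 2)) * hphi
    + ((millsApprox (-l * x) * millsApprox x / π + snTailCorrection l x) *
        (-l * π * (1 + l ^ 2) * x ^ 2)) * exp_neg_mul_sq_mul_exp_mul_sq _ x
    + millsApprox_mul_millsApprox_add_snTailCorrection hl.ne hx.ne'

lemma stdPhi_mul_stdCdf_le {l t : ℝ} (hl : l < 0) (ht : 0 < t) :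
    stdPhi t * stdCdf (l * t) ≤ (2 * π)⁻¹ / -l * (exp (-((1 + l ^ 2) / 2) * t ^ 2) / t) := by
  have hlt : 0 < -l * t := mul_pos (neg_pos.2 hl) ht
  calc stdPhi t * stdCdf (l * t) ≤ stdPhi t * (stdPhi (-l * t) / (-l * t)) := by
        gcongr
        · exact (stdPhi_pos t).le
        · simpa using stdCdf_neg_le hlt
    _ = stdPhi (-l * t) * stdPhi t / (-l * t) := by ring
    _ = (2 * π)⁻¹ / -l * (exp (-((1 + l ^ 2) / 2) * t ^ 2) / t) := by
        rw [stdPhi_mul_stdPhi, neg_sq]; field_simp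

lemma abs_snTailRemainder_le {l t : ℝ} (hl : l < 0) (ht : 0 < t) :
    |snTailRemainder l t| ≤
      (15 / (π * -l) + 6 * |snTailCoeff6 l|) * (exp (-((1 + l ^ 2) / 2) * t ^ 2) / t ^ 7) := by
  have hA : 0 ≤ stdPhi t * stdCdf (l * t) / t ^ 6 :=
    div_nonneg (mul_nonneg (stdPhi_pos t).le (stdCdf_nonneg _)) (by positivity)
  have hA' : stdPhi t * stdCdf (l * t) / t ^ 6 ≤
      (2 * π)⁻¹ / -l * (exp (-((1 + l ^ 2) / 2) * t ^ 2) / t ^ 7) := by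
    calc stdPhi t * stdCdf (l * t) / t ^ 6
        ≤ (2 * π)⁻¹ / -l * (exp (-((1 + l ^ 2) / 2) * t ^ 2) / t) / t ^ 6 := by
          gcongr ?_ / _
          exact stdPhi_mul_stdCdf_le hl ht
      _ = _ := by field_simp
  have hG : 0 ≤ exp (-((1 + l ^ 2) / 2) * t ^ 2) / t ^ 7 := by positivity
  rw [snTailRemainder]
  calc |-(30 * (stdPhi t * stdCdf (l * t) / t ^ 6))
        - 6 * snTailCoeff6 l * (exp (-((1 + l ^ 2) / 2) * t ^ 2) / t ^ 7)|
      ≤ 30 * (stdPhi t * stdCdf (l * t) / t ^ 6)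
        + 6 * |snTailCoeff6 l| * (exp (-((1 + l ^ 2) / 2) * t ^ 2) / t ^ 7) := by
        refine (abs_sub _ _).trans (add_le_add (by rw [abs_neg, abs_of_nonneg (by positivity)])
          (le_of_eq ?_))
        rw [abs_mul, abs_mul, abs_of_nonneg hG, abs_of_pos (by norm_num : (0 : ℝ) < 6)]
    _ ≤ _ := by
        have : 30 * ((2 * π)⁻¹ / -l) = 15 / (π * -l) := by field_simp; ring
        nlinarith

lemma abs_integral_snTailRemainder_le {l x : ℝ} (hl : l < 0) (hx : 0 < x) :
    |∫ t in Ioi x, snTailRemainder l t| ≤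
      (15 / (π * -l) + 6 * |snTailCoeff6 l|) *
        (exp (-((1 + l ^ 2) / 2) * x ^ 2) / ((1 + l ^ 2) * x ^ 8)) := by
  have hb : 0 < (1 + l ^ 2) / 2 := by positivity
  rw [← Real.norm_eq_abs]
  calc ‖∫ t in Ioi x, snTailRemainder l t‖
      ≤ ∫ t in Ioi x, (15 / (π * -l) + 6 * |snTailCoeff6 l|) *
          (exp (-((1 + l ^ 2) / 2) * t ^ 2) / t ^ 7) :=
        norm_integral_le_of_norm_le ((integrableOn_Ioi_exp_neg_mul_sq_div_pow hb hx 7).const_mul _)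
          ((ae_restrict_mem measurableSet_Ioi).mono fun t ht =>
            abs_snTailRemainder_le hl (hx.trans ht))
    _ ≤ _ := by
        rw [integral_const_mul]
        gcongr
        · have := neg_pos.2 hl; positivity
        · refine (integral_Ioi_exp_neg_mul_sq_div_pow_le hb hx 7).trans_eq ?_
          ring

lemma abs_integral_snTailRemainder_mul_snTailScale_le {l x : ℝ} (hl : l < 0) (hx : 0 < x) :
    |(∫ t in Ioi x, snTailRemainder l t) * snTailScale l x| ≤
      (15 / (π * -l) + 6 * |snTailCoeff6 l|) * -l * π * (x ^ 6)⁻¹ := by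
  have hscale : 0 < snTailScale l x := by
    have := neg_pos.2 hl; rw [snTailScale]; positivity
  rw [abs_mul, abs_of_pos hscale]
  calc |∫ t in Ioi x, snTailRemainder l t| * snTailScale l x
      ≤ (15 / (π * -l) + 6 * |snTailCoeff6 l|) *
          (exp (-((1 + l ^ 2) / 2) * x ^ 2) / ((1 + l ^ 2) * x ^ 8)) * snTailScale l x := by
        gcongr
        exact abs_integral_snTailRemainder_le hl hx
    _ = (15 / (π * -l) + 6 * |snTailCoeff6 l|) * -l * π * (x ^ 6)⁻¹ *
          (exp (-((1 + l ^ 2) / 2) * x ^ 2) * exp ((1 + l ^ 2) * x ^ 2 / 2)) := by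
        rw [snTailScale]; field_simp
    _ = _ := by rw [exp_neg_mul_sq_mul_exp_mul_sq, mul_one]

lemma abs_integral_stdPhi_div_pow_mul_snTailScale_le {l x : ℝ} (hl : l < 0) (hx : 0 < x)
    (hx3 : 3 ≤ x ^ 2) :
    |(∫ t in Ioi (-l * x), stdPhi t / t ^ 6) * (stdPhi x * millsApprox x) * snTailScale l x| ≤
      (1 + l ^ 2) / (2 * l ^ 6) * (x ^ 6)⁻¹ := by
  have hlx : 0 < -l * x := mul_pos (neg_pos.2 hl) hx
  have hJ : 0 ≤ ∫ t in Ioi (-l * x), stdPhi t / t ^ 6 :=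
    setIntegral_nonneg measurableSet_Ioi fun t ht =>
      div_nonneg (stdPhi_pos t).le (pow_pos (hlx.trans ht) 6).le
  have hscale : 0 < snTailScale l x := by
    have := neg_pos.2 hl; rw [snTailScale]; positivity
  have hphi : stdPhi (-l * x) * stdPhi x = (2 * π)⁻¹ * exp (-((1 + l ^ 2) / 2) * x ^ 2) := by
    rw [stdPhi_mul_stdPhi, neg_sq]
  have := stdPhi_pos x
  have := millsApprox_nonneg hx
  rw [abs_of_nonneg (by positivity)]
  calc (∫ t in Ioi (-l * x), stdPhi t / t ^ 6) * (stdPhi x * millsApprox x) * snTailScale l x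
      ≤ stdPhi (-l * x) / (-l * x) ^ (6 + 1) * (stdPhi x * x⁻¹) * snTailScale l x := by
        gcongr
        · have := stdPhi_pos (-l * x); positivity
        · exact integral_Ioi_stdPhi_div_pow_le hlx 6
        · exact millsApprox_le_inv hx hx3
    _ = (1 + l ^ 2) / (2 * l ^ 6) * (x ^ 6)⁻¹ *
          (exp (-((1 + l ^ 2) / 2) * x ^ 2) * exp ((1 + l ^ 2) * x ^ 2 / 2)) := by
        rw [snTailScale, show stdPhi (-l * x) / (-l * x) ^ (6 + 1) * (stdPhi x * x⁻¹) =
          stdPhi (-l * x) * stdPhi x / ((-l * x) ^ 7 * x) by ring, hphi]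
        field_simp
    _ = _ := by rw [exp_neg_mul_sq_mul_exp_mul_sq, mul_one]

lemma isBigO_one_sub_snCdf_mul_snTailScale_sub_snTailExpansion {l : ℝ} (hl : l < 0) :
    (fun x => (1 - snCdf l x) * snTailScale l x - snTailExpansion l x) =O[atTop]
      fun x => (x ^ 6)⁻¹ := by
  have h6 := (isBigO_refl (fun x : ℝ => (x ^ 6)⁻¹) atTop).const_mul_left
    (3 * (1 + l ^ 2) ^ 2 / l ^ 4)
  have h8 := (isBigO_inv_pow_inv_pow (show 6 ≤ 8 by norm_num)).const_mul_left
    (9 * (1 + l ^ 2) / l ^ 4)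
  have hmills : (fun x => (∫ t in Ioi (-l * x), stdPhi t / t ^ 6) * (stdPhi x * millsApprox x)
      * snTailScale l x) =O[atTop] fun x => (x ^ 6)⁻¹ :=
    IsBigO.of_bound _ <| (eventually_ge_atTop 2).mono fun x hx => by
      rw [Real.norm_eq_abs, Real.norm_of_nonneg (by positivity)]
      exact abs_integral_stdPhi_div_pow_mul_snTailScale_le hl (by linarith) (by nlinarith)
  have hrem : (fun x => (∫ t in Ioi x, snTailRemainder l t) * snTailScale l x) =O[atTop]
      fun x => (x ^ 6)⁻¹ :=
    IsBigO.of_bound _ <| (eventually_gt_atTop 0).mono fun x hx => by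
      rw [Real.norm_eq_abs, Real.norm_of_nonneg (by positivity)]
      exact abs_integral_snTailRemainder_mul_snTailScale_le hl hx
  refine (((h8.sub h6).sub (hmills.const_mul_left 30)).add hrem).congr' ?_ EventuallyEq.rfl
  filter_upwards [eventually_gt_atTop 0] with x hx
  rw [one_sub_snCdf_eq_snTailApprox_add l hx, add_mul, snTailApprox_mul_snTailScale hl hx]
  ring

theorem skew_normal_tail_expansion_neg (l : ℝ) (hl : l < 0) :
    ∃ C > (0 : ℝ), ∃ x₀ > (0 : ℝ), ∀ x ≥ x₀,
      |(1 - snCdf l x) * (-l) * Real.pi * (1 + l ^ 2) * x ^ 2 *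
          Real.exp ((1 + l ^ 2) * x ^ 2 / 2) -
        (1 - ((1 + 3 * l ^ 2) / (l ^ 2 * (1 + l ^ 2))) * (x ^ 2)⁻¹ +
          ((15 * l ^ 4 + 10 * l ^ 2 + 3) / (l ^ 4 * (1 + l ^ 2) ^ 2)) * (x ^ 4)⁻¹)|
        ≤ C * (x ^ 6)⁻¹ := by
  obtain ⟨C, hC, hO⟩ := (isBigO_one_sub_snCdf_mul_snTailScale_sub_snTailExpansion hl).exists_pos
  obtain ⟨x₀, hx₀⟩ := eventually_atTop.1 hO.bound
  refine ⟨C, hC, max x₀ 1, lt_max_of_lt_right one_pos, fun x hx => ?_⟩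
  have h := hx₀ x (le_of_max_le_left hx)
  rw [Real.norm_eq_abs, Real.norm_of_nonneg (by positivity)] at h
  have hscale : (1 - snCdf l x) * (-l) * π * (1 + l ^ 2) * x ^ 2 *
      exp ((1 + l ^ 2) * x ^ 2 / 2) = (1 - snCdf l x) * snTailScale l x := by
    rw [snTailScale]; ring
  rw [hscale]
  exact h
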